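/- Let A* ∈ ℂ^{N×n} be isometric, x0 ∈ ℂ^n with y0 := A*x0 having all components nonzero, b := |y0|, ω0 the componentwise phase of y0, and B := A·diag(ω0) with A = (A*)^H. Let S_loc(v) = (I − B*B)Re(v) + i B*B Im(v). Then S_loc(b) = 0 and S_loc(i b) = i b; that is, the real vector b = |A*x0| is in the kernel of S_loc, and i b is a fixed point (eigenvector with eigenvalue 1) of S_loc. -/

import Mathlib

open Matrix Complex

noncomputable section

/-- The componentwise phase `z/|z|`. -/
noncomputable def phase (z : ℂ) : ℂ := z / (‖z‖ : ℂ)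

/-- `B = A · diag(ω0)` where `A = (A*)ᴴ`. -/
noncomputable def Bmat {N n : ℕ} (Aadj : Matrix (Fin N) (Fin n) ℂ) (ω0 : Fin N → ℂ) :
    Matrix (Fin n) (Fin N) ℂ := fun i j => Aadjᴴ i j * ω0 j

/-- The linearization `S_loc(v) = (I − B*B) Re(v) + i B*B Im(v)`. -/
noncomputable def Sloc {n N : ℕ} (B : Matrix (Fin n) (Fin N) ℂ) (v : Fin N → ℂ) : Fin N → ℂ :=
  fun j => (((v j).re : ℂ) - (Bᴴ * B).mulVec (fun i => (((v i).re : ℝ) : ℂ)) j)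
    + Complex.I * (Bᴴ * B).mulVec (fun i => (((v i).im : ℝ) : ℂ)) j

open ComplexConjugate

theorem phase_mul_norm (z : ℂ) : phase z * ‖z‖ = z := by
  rcases eq_or_ne z 0 with rfl | hz
  · simp [phase]
  · exact div_mul_cancel₀ z (ofReal_ne_zero.mpr (norm_ne_zero_iff.mpr hz))

theorem conj_phase_mul_self (z : ℂ) : conj (phase z) * z = ‖z‖ := by
  rcases eq_or_ne z 0 with rfl | hz
  · simp [phase]
  · have hnorm : (‖z‖ : ℂ) ≠ 0 := ofReal_ne_zero.mpr (norm_ne_zero_iff.mpr hz)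
    rw [phase, map_div₀, conj_ofReal, div_mul_eq_mul_div, mul_comm, mul_conj, normSq_eq_norm_sq,
      ofReal_pow, sq, mul_div_cancel_right₀ _ hnorm]

theorem Bmat_eq_mul_diagonal {N n : ℕ} (A : Matrix (Fin N) (Fin n) ℂ) (ω : Fin N → ℂ) :
    Bmat A ω = Aᴴ * diagonal ω := by
  ext i j
  simp [Bmat, mul_diagonal]

theorem conjTranspose_Bmat_mul_Bmat {N n : ℕ} (A : Matrix (Fin N) (Fin n) ℂ) (ω : Fin N → ℂ) :
    (Bmat A ω)ᴴ * Bmat A ω = diagonal (star ω) * (A * Aᴴ) * diagonal ω := by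
  rw [Bmat_eq_mul_diagonal, conjTranspose_mul, diagonal_conjTranspose, conjTranspose_conjTranspose,
    Matrix.mul_assoc, Matrix.mul_assoc, Matrix.mul_assoc]

/-- Undoing the phase of `y = A x` gives back `y`, which the projection `A Aᴴ` fixes. -/
theorem conjTranspose_Bmat_mul_Bmat_mulVec_norm {N n : ℕ} (A : Matrix (Fin N) (Fin n) ℂ)
    (hiso : Aᴴ * A = 1) (x : Fin n → ℂ) :
    ((Bmat A (fun j => phase ((A *ᵥ x) j)))ᴴ * Bmat A (fun j => phase ((A *ᵥ x) j))) *ᵥ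
        (fun j => (‖(A *ᵥ x) j‖ : ℂ)) = fun j => (‖(A *ᵥ x) j‖ : ℂ) := by
  set y := A *ᵥ x
  have hphase : diagonal (fun j => phase (y j)) *ᵥ (fun j => (‖y j‖ : ℂ)) = y := by
    funext j
    simp only [mulVec_diagonal, phase_mul_norm]
  have hproj : (A * Aᴴ) *ᵥ y = y := by
    rw [← mulVec_mulVec, mulVec_mulVec x, hiso, one_mulVec]
  rw [conjTranspose_Bmat_mul_Bmat, ← mulVec_mulVec, hphase, ← mulVec_mulVec, hproj]
  funext j
  simp only [mulVec_diagonal, Pi.star_apply, star_def, conj_phase_mul_self]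

theorem Sloc_ofReal {n N : ℕ} (B : Matrix (Fin n) (Fin N) ℂ) (v : Fin N → ℝ) :
    Sloc B (fun j => (v j : ℂ)) = (fun j => (v j : ℂ)) - (Bᴴ * B) *ᵥ (fun j => (v j : ℂ)) := by
  funext j
  simp [Sloc, ← Pi.zero_def]

theorem Sloc_I_mul_ofReal {n N : ℕ} (B : Matrix (Fin n) (Fin N) ℂ) (v : Fin N → ℝ) :
    Sloc B (fun j => I * (v j : ℂ)) = fun j => I * ((Bᴴ * B) *ᵥ (fun j => (v j : ℂ))) j := by
  funext j
  simp [Sloc, ← Pi.zero_def]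

theorem stmt6_general (N n : ℕ) (Aadj : Matrix (Fin N) (Fin n) ℂ) (hiso : Aadjᴴ * Aadj = 1)
    (x0 : Fin n → ℂ)
    (ω0 : Fin N → ℂ) (hω0 : ∀ j, ω0 j = phase (Aadj.mulVec x0 j)) :
    Sloc (Bmat Aadj ω0) (fun j => ((‖Aadj.mulVec x0 j‖ : ℝ) : ℂ)) = 0 ∧
    Sloc (Bmat Aadj ω0) (fun j => Complex.I * ((‖Aadj.mulVec x0 j‖ : ℝ) : ℂ))
      = fun j => Complex.I * ((‖Aadj.mulVec x0 j‖ : ℝ) : ℂ) := by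
  obtain rfl : ω0 = fun j => phase ((Aadj *ᵥ x0) j) := funext hω0
  have hfixed := conjTranspose_Bmat_mul_Bmat_mulVec_norm Aadj hiso x0
  refine ⟨?_, ?_⟩
  · rw [Sloc_ofReal, hfixed, sub_self]
  · rw [Sloc_I_mul_ofReal, hfixed]

/-- The vector `b = |A*x0|` lies in the kernel of `S_loc` and `i b` is a fixed point of
`S_loc`. -/
theorem stmt6 (N n : ℕ) (Aadj : Matrix (Fin N) (Fin n) ℂ) (hiso : Aadjᴴ * Aadj = 1)
    (x0 : Fin n → ℂ) (hy0 : ∀ j, Aadj.mulVec x0 j ≠ 0)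
    (ω0 : Fin N → ℂ) (hω0 : ∀ j, ω0 j = phase (Aadj.mulVec x0 j)) :
    Sloc (Bmat Aadj ω0) (fun j => ((‖Aadj.mulVec x0 j‖ : ℝ) : ℂ)) = 0 ∧
    Sloc (Bmat Aadj ω0) (fun j => Complex.I * ((‖Aadj.mulVec x0 j‖ : ℝ) : ℂ))
      = fun j => Complex.I * ((‖Aadj.mulVec x0 j‖ : ℝ) : ℂ) :=
  stmt6_general N n Aadj hiso x0 ω0 hω0
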